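/- arXiv:2311.12634 — 5 statements merged into one kernel-verified Lean document; each statement's English description precedes it below -/
import Mathlib

section
/- (q-Vandermonde formula) Let 0 < q < 1 be a real number, let x and y be real numbers, and let n be a natural number. Define, for a real number t, [t]_q = (1 - q^t)/(1 - q) (real exponentiation), and the q-falling factorial [t]_{m} = [t]_q [t-1]_q ⋯ [t-m+1]_q (with [t]_0 = 1). Then [x+y]_{n} = Σ_{k=0}^{n} [n choose k]_q · q^{k(y - n + k)} · [x]_{k} · [y]_{n-k}. -/
/-- The `q`-number of a real `t`: `[t]_q = (1 - q^t)/(1 - q)` (real exponentiation). -/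
noncomputable def qnumR (q t : ℝ) : ℝ := (1 - q ^ t) / (1 - q)

/-- The `q`-number `[m]_q = (1 - q^m)/(1 - q)`. -/
noncomputable def qnum (q : ℝ) (m : ℕ) : ℝ := (1 - q ^ m) / (1 - q)

/-- The `q`-factorial `[n]_q! = [1]_q [2]_q ⋯ [n]_q`. -/
noncomputable def qfact (q : ℝ) (n : ℕ) : ℝ := ∏ i ∈ Finset.range n, qnum q (i + 1)

/-- The `q`-binomial coefficient `[n choose k]_q = [n]_q! / ([k]_q! [n-k]_q!)`. -/
noncomputable def qbinom (q : ℝ) (n k : ℕ) : ℝ := qfact q n / (qfact q k * qfact q (n - k))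

/-- The `q`-falling factorial `[t]_m = [t]_q [t-1]_q ⋯ [t-m+1]_q` of a real `t`. -/
noncomputable def qfall (q t : ℝ) (m : ℕ) : ℝ := ∏ i ∈ Finset.range m, qnumR q (t - i)

/-!
Divide by `[n]_q!`: with the real `q`-binomial `[t choose m]_q = [t]_m / [m]_q!` and `k(y - n + k) =
i(y - j)` for `(i, j) = (k, n - k)`, the formula becomes the `q`-Chu–Vandermonde identity
`[x+y choose n]_q = Σ_{i+j=n} q^{i(y-j)} [x choose i]_q [y choose j]_q`.
It follows by induction on `n` from `[m+1]_q [t choose m+1]_q = [t-m]_q [t choose m]_q` and the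
addition rule `[a+b]_q = q^a [b]_q + [a]_q`, applied once as `[x+y-n]_q = q^{y-j}[x-i]_q + [y-j]_q`
and once as `[n+1]_q = [i]_q + q^i [j]_q` for `i + j = n + 1`.
-/

open Finset

section QNumbers

variable {q : ℝ}

lemma qnumR_add (hq0 : 0 < q) (hq1 : q ≠ 1) (a b : ℝ) :
    qnumR q (a + b) = q ^ a * qnumR q b + qnumR q a := by
  have : 1 - q ≠ 0 := sub_ne_zero.mpr hq1.symm
  unfold qnumR
  rw [Real.rpow_add hq0]
  field_simp
  ring

@[simp]
lemma qnumR_zero : qnumR q 0 = 0 := by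
  simp [qnumR]

lemma qnum_eq_qnumR (m : ℕ) : qnum q m = qnumR q m := by
  rw [qnum, qnumR, Real.rpow_natCast]

lemma qnum_succ_ne_zero (hq0 : 0 ≤ q) (hq1 : q ≠ 1) (m : ℕ) : qnum q (m + 1) ≠ 0 := by
  have hpow : q ^ (m + 1) ≠ 1 := by
    rwa [Ne, pow_eq_one_iff_of_nonneg hq0 m.succ_ne_zero]
  exact div_ne_zero (sub_ne_zero.mpr hpow.symm) (sub_ne_zero.mpr hq1.symm)

lemma qfact_ne_zero (hq0 : 0 ≤ q) (hq1 : q ≠ 1) (n : ℕ) : qfact q n ≠ 0 :=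
  prod_ne_zero_iff.mpr fun m _ => qnum_succ_ne_zero hq0 hq1 m

lemma qfact_succ (n : ℕ) : qfact q (n + 1) = qfact q n * qnum q (n + 1) :=
  prod_range_succ _ _

lemma qfall_succ (t : ℝ) (m : ℕ) : qfall q t (m + 1) = qfall q t m * qnumR q (t - m) :=
  prod_range_succ _ _

end QNumbers

noncomputable def qbinomR (q t : ℝ) (m : ℕ) : ℝ := qfall q t m / qfact q m

section QBinomR

variable {q : ℝ}

lemma qnumR_succ_mul_qbinomR_succ (hq0 : 0 ≤ q) (hq1 : q ≠ 1) (t : ℝ) (m : ℕ) :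
    qnumR q (m + 1) * qbinomR q t (m + 1) = qnumR q (t - m) * qbinomR q t m := by
  have hm := qnum_succ_ne_zero hq0 hq1 m
  have hfact := qfact_ne_zero hq0 hq1 m
  rw [qbinomR, qbinomR, qfall_succ, qfact_succ]
  rw [qnum_eq_qnumR, Nat.cast_succ] at hm ⊢
  field_simp

lemma qnumR_add_mul_qbinomR_mul_qbinomR (hq0 : 0 < q) (hq1 : q ≠ 1) (x y : ℝ) (i j : ℕ) :
    qnumR q ((y - j) + (x - i)) * (q ^ ((i : ℝ) * (y - j)) * qbinomR q x i * qbinomR q y j) =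
      qnumR q ((i + 1 : ℕ) : ℝ)
          * (q ^ (((i + 1 : ℕ) : ℝ) * (y - j)) * qbinomR q x (i + 1) * qbinomR q y j)
        + q ^ (i : ℝ) * qnumR q ((j + 1 : ℕ) : ℝ)
          * (q ^ ((i : ℝ) * (y - ((j + 1 : ℕ) : ℝ))) * qbinomR q x i * qbinomR q y (j + 1)) := by
  have hx := qnumR_succ_mul_qbinomR_succ hq0.le hq1 x i
  have hy := qnumR_succ_mul_qbinomR_succ hq0.le hq1 y j
  set c := q ^ ((i : ℝ) * (y - (j + 1)))
  have hqi : q ^ ((i + 1 : ℝ) * (y - j)) = q ^ (i : ℝ) * c * q ^ (y - j) := by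
    rw [← Real.rpow_add hq0, ← Real.rpow_add hq0]; ring_nf
  have hqj : q ^ ((i : ℝ) * (y - j)) = q ^ (i : ℝ) * c := by
    rw [← Real.rpow_add hq0]; ring_nf
  push_cast
  rw [qnumR_add hq0 hq1, hqi, hqj]
  linear_combination (-(q ^ (i : ℝ) * c * q ^ (y - j) * qbinomR q y j)) * hx
    - q ^ (i : ℝ) * c * qbinomR q x i * hy

theorem qbinomR_add (hq0 : 0 < q) (hq1 : q ≠ 1) (x y : ℝ) (n : ℕ) :
    qbinomR q (x + y) n = ∑ p ∈ antidiagonal n,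
      q ^ ((p.1 : ℝ) * (y - p.2)) * qbinomR q x p.1 * qbinomR q y p.2 := by
  set h : ℕ × ℕ → ℝ := fun p => q ^ ((p.1 : ℝ) * (y - p.2)) * qbinomR q x p.1 * qbinomR q y p.2
  induction n with
  | zero => simp [h, qbinomR, qfall, qfact]
  | succ n ih =>
    have hn : qnumR q (n + 1) ≠ 0 := by
      rw [← Nat.cast_succ, ← qnum_eq_qnumR]; exact qnum_succ_ne_zero hq0.le hq1 n
    have split : ∀ p ∈ antidiagonal n, qnumR q (x + y - n) * h p =
        qnumR q ((p.1 + 1 : ℕ) : ℝ) * h (p.1 + 1, p.2)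
          + q ^ (p.1 : ℝ) * qnumR q ((p.2 + 1 : ℕ) : ℝ) * h (p.1, p.2 + 1) := by
      rintro ⟨i, j⟩ hij
      have hsum : x + y - n = (y - j) + (x - i) := by
        rw [← mem_antidiagonal.mp hij]; push_cast; ring
      rw [hsum]
      exact qnumR_add_mul_qbinomR_mul_qbinomR hq0 hq1 x y i j
    have merge : ∀ p ∈ antidiagonal (n + 1), qnumR q (n + 1) * h p =
        qnumR q (p.1 : ℝ) * h p + q ^ (p.1 : ℝ) * qnumR q (p.2 : ℝ) * h p := by
      rintro ⟨i, j⟩ hij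
      have hij' : (n : ℝ) + 1 = i + j := by exact_mod_cast (mem_antidiagonal.mp hij).symm
      rw [hij', qnumR_add hq0 hq1]
      ring
    apply mul_left_cancel₀ hn
    calc qnumR q (n + 1) * qbinomR q (x + y) (n + 1)
        = ∑ p ∈ antidiagonal n, qnumR q (x + y - n) * h p := by
          rw [qnumR_succ_mul_qbinomR_succ hq0.le hq1, ih, mul_sum]
      _ = ∑ p ∈ antidiagonal (n + 1), qnumR q (p.1 : ℝ) * h p
            + ∑ p ∈ antidiagonal (n + 1), q ^ (p.1 : ℝ) * qnumR q (p.2 : ℝ) * h p := by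
          rw [sum_congr rfl split, sum_add_distrib, Nat.sum_antidiagonal_succ,
            Nat.sum_antidiagonal_succ']
          simp
      _ = qnumR q (n + 1) * ∑ p ∈ antidiagonal (n + 1), h p := by
          rw [mul_sum, sum_congr rfl merge, sum_add_distrib]

end QBinomR

/-- The `q`-Vandermonde formula:
`[x+y]_n = Σ_{k=0}^{n} [n choose k]_q q^{k(y-n+k)} [x]_k [y]_{n-k}`. -/
theorem stmt2 (q : ℝ) (hq0 : 0 < q) (hq1 : q < 1) (x y : ℝ) (n : ℕ) :
    qfall q (x + y) n
      = ∑ k ∈ Finset.range (n + 1),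
          qbinom q n k * q ^ ((k : ℝ) * (y - (n : ℝ) + (k : ℝ)))
            * qfall q x k * qfall q y (n - k) := by
  have hfact := qfact_ne_zero hq0.le hq1.ne
  rw [← mul_div_cancel₀ (qfall q (x + y) n) (hfact n), ← qbinomR, qbinomR_add hq0 hq1.ne,
    Nat.sum_antidiagonal_eq_sum_range_succ_mk, mul_sum]
  refine sum_congr rfl fun k hk => ?_
  have hkn : k ≤ n := Nat.lt_succ_iff.mp (mem_range.mp hk)
  rw [Nat.cast_sub hkn, show y - ((n : ℝ) - k) = y - n + k by ring, qbinomR, qbinomR, qbinom]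
  field_simp [hfact]
end

section
/- Let 0 < q < 1, let t > 0 be a real number, and let ν ≥ 1 be a natural number. Define F(y) = 1 − ∏_{i=1}^{ν} (1 − y/(q^{i-1} t)). Then for every real y ≠ 0, the q-derivative of F at y satisfies (F(y) − F(qy)) / ((1−q) y) = ([ν]_q / (q^{ν−1} t)) · ∏_{i=1}^{ν−1} (1 − y/(q^{i-1} t)). -/
/-!
Write `P_n(y) = ∏_{i<n} (1 - y/(q^i t))`. Replacing `y` by `q y` shifts the factors by one index,
so `P_{n+1}(q y) = (1 - q y/t) P_n(y)`, while `P_{n+1}(y) = P_n(y) (1 - y/(q^n t))`. Hence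
`F(y) - F(q y)` is `P_n(y)` times the difference of two single factors, `y (1 - q^{n+1})/(q^n t)`,
and dividing by `(1 - q) y` leaves `[n+1]_q/(q^n t) · P_n(y)`.
-/

open Finset

section
variable {K : Type*} [Field K] {q : K}

theorem prod_range_succ_one_sub_q_mul_div (hq : q ≠ 0) (t y : K) (n : ℕ) :
    ∏ i ∈ range (n + 1), (1 - q * y / (q ^ i * t)) =
      (1 - q * y / t) * ∏ i ∈ range n, (1 - y / (q ^ i * t)) := by
  rw [prod_range_succ', pow_zero, one_mul, mul_comm]
  congr 1
  refine prod_congr rfl fun i _ => ?_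
  rw [pow_succ', mul_assoc, mul_div_mul_left _ _ hq]

theorem prod_range_succ_q_mul_sub_prod (hq : q ≠ 0) (t y : K) (n : ℕ) :
    ∏ i ∈ range (n + 1), (1 - q * y / (q ^ i * t)) - ∏ i ∈ range (n + 1), (1 - y / (q ^ i * t)) =
      y * (1 - q ^ (n + 1)) / (q ^ n * t) * ∏ i ∈ range n, (1 - y / (q ^ i * t)) := by
  rw [prod_range_succ_one_sub_q_mul_div hq, prod_range_succ, mul_comm _ (1 - _), ← sub_mul,
    sub_sub_sub_cancel_left, mul_one_sub, sub_div, pow_succ, mul_left_comm, mul_comm y q,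
    mul_div_mul_left _ _ (pow_ne_zero n hq)]

end

theorem stmt10_general (q t : ℝ) (hq0 : 0 < q) (ν : ℕ) (hν : 1 ≤ ν)
    (F : ℝ → ℝ)
    (hF : ∀ y : ℝ, F y = 1 - ∏ i ∈ Finset.range ν, (1 - y / (q ^ i * t)))
    (y : ℝ) (hy : y ≠ 0) :
    (F y - F (q * y)) / ((1 - q) * y)
      = qnum q ν / (q ^ (ν - 1) * t) * ∏ i ∈ Finset.range (ν - 1), (1 - y / (q ^ i * t)) := by
  obtain ⟨n, rfl⟩ := Nat.exists_eq_add_of_le' hν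
  rw [hF, hF, sub_sub_sub_cancel_left, prod_range_succ_q_mul_sub_prod hq0.ne', Nat.add_sub_cancel,
    qnum]
  field_simp

/-- The `q`-derivative of the `q`-distribution function
`F(y) = 1 − ∏_{i=1}^{ν} (1 − y/(q^{i-1} t))` of the minimum of `ν` dependent `q`-uniform
random variables is `([ν]_q / (q^{ν−1} t)) ∏_{i=1}^{ν−1} (1 − y/(q^{i-1} t))`. -/
theorem stmt10 (q t : ℝ) (hq0 : 0 < q) (hq1 : q < 1) (ht : 0 < t) (ν : ℕ) (hν : 1 ≤ ν)
    (F : ℝ → ℝ)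
    (hF : ∀ y : ℝ, F y = 1 - ∏ i ∈ Finset.range ν, (1 - y / (q ^ i * t)))
    (y : ℝ) (hy : y ≠ 0) :
    (F y - F (q * y)) / ((1 - q) * y)
      = qnum q ν / (q ^ (ν - 1) * t) * ∏ i ∈ Finset.range (ν - 1), (1 - y / (q ^ i * t)) :=
  stmt10_general q t hq0 ν hν F hF y hy
end

section
/- Let 0 < q < 1, let t > 0 be a real number, and let ν ≥ 1 be a natural number. Then the Jackson q-integral over [0, t] of the function f(y) = ([ν]_q / (q^{ν−1} t)) · ∏_{i=1}^{ν−1} (1 − y/(q^{i-1} t)) equals 1; equivalently, [ν]_q q^{-(ν-1)} (1−q) Σ_{n=0}^{∞} q^n ∏_{i=1}^{ν−1} (1 − q^{n−i+1}) = 1. -/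
/-!
Write `P_m(n) = ∏_{i<m} (1 - q^n / q^i)`, so that the Jackson sum is a multiple of
`∑ₙ qⁿ P_m(n)`. Splitting off the last resp. the first factor of `P_{m+1}` gives the telescoping
identity `P_{m+1}(n+1) - P_{m+1}(n) = qⁿ⁻ᵐ (1 - q^{m+1}) P_m(n)`. Since `P_{m+1}(0) = 0` and
`P_{m+1}(n) → 1`, the sum equals `q^m / (1 - q^{m+1}) = q^m / ((1 - q) [m+1]_q)`.
-/

open Finset Filter Topology

noncomputable section

/-- The density's product `∏_{i=1}^{m} (1 - y / (q^{i-1} t))` at the node `y = t qⁿ`. -/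
def densityProd {K : Type*} [Field K] (q : K) (m n : ℕ) : K :=
  ∏ i ∈ range m, (1 - q ^ n / q ^ i)

section Field

variable {K : Type*} [Field K] {q : K}

theorem densityProd_succ_zero (m : ℕ) : densityProd q (m + 1) 0 = 0 := by
  simp [densityProd, prod_range_succ']

theorem densityProd_succ_succ_sub (hq : q ≠ 0) (m n : ℕ) :
    densityProd q (m + 1) (n + 1) - densityProd q (m + 1) n =
      q ^ n * (1 - q ^ (m + 1)) / q ^ m * densityProd q m n := by
  have hlast : densityProd q (m + 1) n = densityProd q m n * (1 - q ^ n / q ^ m) :=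
    prod_range_succ (fun i => 1 - q ^ n / q ^ i) m
  have hfirst : densityProd q (m + 1) (n + 1) = (1 - q ^ (n + 1)) * densityProd q m n := by
    rw [densityProd, prod_range_succ', mul_comm]
    congr 1
    · simp
    · refine prod_congr rfl fun i _ => ?_
      rw [pow_succ, pow_succ, mul_div_mul_right _ _ hq]
  rw [hlast, hfirst]
  field_simp
  ring

end Field

variable {q : ℝ}

theorem densityProd_nonneg (hq0 : 0 < q) (hq1 : q ≤ 1) (m n : ℕ) : 0 ≤ densityProd q m n := by
  unfold densityProd
  by_cases hnm : n < m
  · exact (prod_eq_zero (mem_range.mpr hnm) (by simp [hq0.ne'])).ge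
  · refine prod_nonneg fun i hi => sub_nonneg.mpr ?_
    rw [div_le_one (pow_pos hq0 i)]
    exact pow_le_pow_of_le_one hq0.le hq1 (by simp at hi; omega)

theorem tendsto_densityProd (hq0 : 0 ≤ q) (hq1 : q < 1) (m : ℕ) :
    Tendsto (densityProd q m) atTop (𝓝 1) := by
  have hfactor (i : ℕ) : Tendsto (fun n => 1 - q ^ n / q ^ i) atTop (𝓝 1) := by
    simpa using tendsto_const_nhds.sub
      ((tendsto_pow_atTop_nhds_zero_of_lt_one hq0 hq1).div_const (q ^ i))
  have hprod : Tendsto (densityProd q m) atTop (𝓝 (∏ _i ∈ range m, 1)) :=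
    tendsto_finsetProd (range m) fun i _ => hfactor i
  simpa using hprod

theorem hasSum_pow_mul_densityProd (hq0 : 0 < q) (hq1 : q < 1) (m : ℕ) :
    HasSum (fun n => q ^ n * densityProd q m n) (q ^ m / (1 - q ^ (m + 1))) := by
  set c := q ^ m / (1 - q ^ (m + 1))
  have hden : 1 - q ^ (m + 1) ≠ 0 := (sub_pos.mpr (pow_lt_one₀ hq0.le hq1 m.succ_ne_zero)).ne'
  have hterm (n : ℕ) : q ^ n * densityProd q m n =
      c * (densityProd q (m + 1) (n + 1) - densityProd q (m + 1) n) := by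
    rw [densityProd_succ_succ_sub hq0.ne']
    simp only [c]
    field_simp
  have hpartial (N : ℕ) :
      ∑ n ∈ range N, q ^ n * densityProd q m n = c * densityProd q (m + 1) N := by
    simp only [hterm, ← mul_sum, sum_range_sub, densityProd_succ_zero, sub_zero]
  rw [hasSum_iff_tendsto_nat_of_nonneg fun n => mul_nonneg (pow_nonneg hq0.le n)
    (densityProd_nonneg hq0 hq1.le m n), funext hpartial]
  simpa using (tendsto_densityProd hq0.le hq1 (m + 1)).const_mul c

end

/-- The Jackson `q`-integral over `[0, t]` of the `q`-density function
`f(y) = ([ν]_q / (q^{ν−1} t)) ∏_{i=1}^{ν−1} (1 − y/(q^{i-1} t))` of the minimum of `ν`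
dependent `q`-uniform random variables equals `1`. -/
theorem stmt11 (q t : ℝ) (hq0 : 0 < q) (hq1 : q < 1) (ht : 0 < t) (ν : ℕ) (hν : 1 ≤ ν) :
    (1 - q) * t * ∑' n : ℕ, q ^ n *
        (qnum q ν / (q ^ (ν - 1) * t)
          * ∏ i ∈ Finset.range (ν - 1), (1 - t * q ^ n / (q ^ i * t)))
      = 1 := by
  obtain ⟨m, rfl⟩ : ∃ m, ν = m + 1 := ⟨ν - 1, by omega⟩
  have hsummand (n : ℕ) : q ^ n * (qnum q (m + 1) / (q ^ m * t) *
      ∏ i ∈ range m, (1 - t * q ^ n / (q ^ i * t))) =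
        qnum q (m + 1) / (q ^ m * t) * (q ^ n * densityProd q m n) := by
    rw [densityProd, mul_left_comm]
    congr 2
    exact prod_congr rfl fun i (_ : i ∈ range m) => by
      rw [mul_comm (q ^ i), mul_div_mul_left _ _ ht.ne']
  have hden : 1 - q ^ (m + 1) ≠ 0 := (sub_pos.mpr (pow_lt_one₀ hq0.le hq1 m.succ_ne_zero)).ne'
  have h1q : 1 - q ≠ 0 := (sub_pos.mpr hq1).ne'
  rw [Nat.add_sub_cancel, tsum_congr hsummand, tsum_mul_left,
    (hasSum_pow_mul_densityProd hq0 hq1 m).tsum_eq, qnum]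
  field_simp
end

section
/- Let 0 < q < 1, let t > 0 be a real number, and let k, ν be natural numbers with 1 ≤ k ≤ ν. Then the Jackson q-integral over [0, t] of the function f(y) = q^{-k(ν-k)} · ([ν]_q! / ([k−1]_q! [ν−k]_q!)) · (y^{k-1}/t^k) · ∏_{j=1}^{ν-k} (1 − y/(q^{j-1} t)) equals 1; equivalently, q^{-k(ν-k)} ([ν]_q!/([k−1]_q![ν−k]_q!)) (1−q) Σ_{n=0}^{∞} q^{nk} ∏_{j=1}^{ν-k} (1 − q^{n−j+1}) = 1. -/
/-!
Put `m = ν - k` and let `C` be the normalising constant. At the nodes `y = t qⁿ` the density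
is `C q^{n(k-1)} ∏_{j<m} (1 - q^{n-j})`, so the `q`-integral is
`(1 - q) C ∑ₙ q^{nk} ∏_{j<m} (1 - q^{n-j})`. The terms with `n < m` vanish, and the shift
`n = i + m` turns the rest into `q^{km}` times the `q`-beta series
`∑ᵢ q^{ik} (q^{i+1}; q)_m = (q; q)_m / (q^k; q)_{m+1}`, which follows by induction on `m` from
`(q^{i+1}; q)_{m+1} = (q^{i+1}; q)_m - q^{m+1} qⁱ (q^{i+1}; q)_m`. Expressed through
`q`-factorials, this is exactly the reciprocal of `(1 - q) C`.
-/

open Finset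

/-- `(q^a; q)_n` in the usual notation. -/
noncomputable def qPochhammer (q : ℝ) (a n : ℕ) : ℝ := ∏ j ∈ range n, (1 - q ^ (a + j))

lemma qPochhammer_succ (q : ℝ) (a n : ℕ) :
    qPochhammer q a (n + 1) = qPochhammer q a n * (1 - q ^ (a + n)) :=
  prod_range_succ _ n

lemma qPochhammer_succ' (q : ℝ) (a n : ℕ) :
    qPochhammer q a (n + 1) = (1 - q ^ a) * qPochhammer q (a + 1) n := by
  rw [qPochhammer, prod_range_succ', add_zero, mul_comm, qPochhammer]
  simp only [add_assoc, add_comm 1]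

section QPochhammer

variable {q : ℝ}

lemma qPochhammer_pos (hq0 : 0 ≤ q) (hq1 : q < 1) {a : ℕ} (ha : a ≠ 0) (n : ℕ) :
    0 < qPochhammer q a n :=
  prod_pos fun j _ => sub_pos.mpr (pow_lt_one₀ hq0 hq1 (by omega))

lemma one_sub_pow_eq_mul_qnum (hq : q ≠ 1) (m : ℕ) : 1 - q ^ m = (1 - q) * qnum q m :=
  (mul_div_cancel₀ _ (sub_ne_zero.mpr hq.symm)).symm

lemma qfact_pos (hq0 : 0 ≤ q) (hq1 : q < 1) (n : ℕ) : 0 < qfact q n :=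
  prod_pos fun i _ => div_pos (sub_pos.mpr (pow_lt_one₀ hq0 hq1 (by omega))) (sub_pos.mpr hq1)

lemma qPochhammer_mul_qfact (hq : q ≠ 1) (a n : ℕ) :
    qPochhammer q (a + 1) n * qfact q a = (1 - q) ^ n * qfact q (a + n) := by
  simp only [qPochhammer, qfact, prod_range_add, one_sub_pow_eq_mul_qnum hq, prod_mul_distrib,
    prod_const, card_range]
  simp only [add_right_comm a 1]
  ring

/-- The `q`-beta integral `∫₀¹ x^{k-1} (qx; q)_m d_q x = (q; q)_m / (q^k; q)_{m+1}`, written as a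
series. -/
lemma hasSum_pow_mul_qPochhammer (hq0 : 0 ≤ q) (hq1 : q < 1) (m : ℕ) {k : ℕ} (hk : k ≠ 0) :
    HasSum (fun i => (q ^ k) ^ i * qPochhammer q (i + 1) m)
      (qPochhammer q 1 m / qPochhammer q k (m + 1)) := by
  induction m generalizing k with
  | zero =>
    simpa [qPochhammer] using hasSum_geometric_of_lt_one (pow_nonneg hq0 k)
      (pow_lt_one₀ hq0 hq1 hk)
  | succ m ih =>
    have hsplit : (fun i => (q ^ k) ^ i * qPochhammer q (i + 1) (m + 1)) = fun i =>
        (q ^ k) ^ i * qPochhammer q (i + 1) m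
          - q ^ (m + 1) * ((q ^ (k + 1)) ^ i * qPochhammer q (i + 1) m) := by
      funext i
      rw [qPochhammer_succ]
      ring
    have hk' : 1 - q ^ k ≠ 0 := (sub_pos.mpr (pow_lt_one₀ hq0 hq1 hk)).ne'
    have hkm : 1 - q ^ (k + 1 + m) ≠ 0 := (sub_pos.mpr (pow_lt_one₀ hq0 hq1 (by omega))).ne'
    have hX := (qPochhammer_pos hq0 hq1 (a := k + 1) (by omega) m).ne'
    have hvalue : qPochhammer q 1 (m + 1) / qPochhammer q k (m + 1 + 1) =
        qPochhammer q 1 m / qPochhammer q k (m + 1)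
          - q ^ (m + 1) * (qPochhammer q 1 m / qPochhammer q (k + 1) (m + 1)) := by
      rw [qPochhammer_succ' q k (m + 1), qPochhammer_succ' q k m, qPochhammer_succ q (k + 1) m,
        qPochhammer_succ q 1 m]
      field_simp
      ring
    rw [hsplit, hvalue]
    exact (ih hk).sub ((ih k.succ_ne_zero).mul_left _)

lemma prod_one_sub_pow_div_pow_eq_qPochhammer (hq : q ≠ 0) (i m : ℕ) :
    ∏ j ∈ range m, (1 - q ^ (i + m) / q ^ j) = qPochhammer q (i + 1) m := by
  rw [qPochhammer, ← prod_range_reflect]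
  refine prod_congr rfl fun j hj => ?_
  have hjm := mem_range.mp hj
  congr 1
  rw [div_eq_iff (pow_ne_zero _ hq), ← pow_add]
  congr 1
  omega

lemma hasSum_pow_mul_prod_one_sub_div_pow (hq0 : 0 < q) (hq1 : q < 1) {k : ℕ}
    (hk : k ≠ 0) (m : ℕ) :
    HasSum (fun n => (q ^ k) ^ n * ∏ j ∈ range m, (1 - q ^ n / q ^ j))
      ((q ^ k) ^ m * (qPochhammer q 1 m / qPochhammer q k (m + 1))) := by
  have hfirst : ∀ n ∈ range m, (q ^ k) ^ n * ∏ j ∈ range m, (1 - q ^ n / q ^ j) = 0 :=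
    fun n hn => by
      rw [prod_eq_zero hn (by rw [div_self (pow_ne_zero n hq0.ne'), sub_self]), mul_zero]
  rw [← hasSum_nat_add_iff' m, sum_eq_zero hfirst, sub_zero]
  have hshift : (fun i => (q ^ k) ^ (i + m) * ∏ j ∈ range m, (1 - q ^ (i + m) / q ^ j)) =
      fun i => (q ^ k) ^ m * ((q ^ k) ^ i * qPochhammer q (i + 1) m) := by
    funext i
    rw [prod_one_sub_pow_div_pow_eq_qPochhammer hq0.ne']
    ring
  rw [hshift]
  exact (hasSum_pow_mul_qPochhammer hq0.le hq1 m hk).mul_left _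

end QPochhammer

/-- The Jackson `q`-integral over `[0, t]` of the `q`-density function
`f(y) = q^{-k(ν-k)} ([ν]_q!/([k−1]_q![ν−k]_q!)) (y^{k-1}/t^k) ∏_{j=1}^{ν-k} (1 − y/(q^{j-1} t))`
of the `k`-th `q`-order statistic equals `1`. -/
theorem stmt13 (q t : ℝ) (hq0 : 0 < q) (hq1 : q < 1) (ht : 0 < t) (k ν : ℕ)
    (hk : 1 ≤ k) (hkν : k ≤ ν) :
    (1 - q) * t * ∑' n : ℕ, q ^ n *
        (q ^ (-((k : ℤ) * ((ν : ℤ) - (k : ℤ))))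
          * (qfact q ν / (qfact q (k - 1) * qfact q (ν - k)))
          * ((t * q ^ n) ^ (k - 1) / t ^ k)
          * ∏ j ∈ Finset.range (ν - k), (1 - t * q ^ n / (q ^ j * t)))
      = 1 := by
  obtain ⟨k, rfl⟩ := Nat.exists_eq_add_of_le' hk
  obtain ⟨m, rfl⟩ := Nat.exists_eq_add_of_le hkν
  have hq : q ≠ 1 := hq1.ne
  have hnum : qPochhammer q 1 m = (1 - q) ^ m * qfact q m := by
    simpa [qfact] using qPochhammer_mul_qfact hq 0 m
  have hden :
      qPochhammer q (k + 1) (m + 1) * qfact q k = (1 - q) ^ (m + 1) * qfact q (k + 1 + m) := by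
    rw [qPochhammer_mul_qfact hq, add_right_comm, add_assoc]
  have hexp :
      -(((k + 1 : ℕ) : ℤ) * ((k + 1 + m : ℕ) - (k + 1 : ℕ))) = -(((k + 1) * m : ℕ) : ℤ) := by
    push_cast; ring
  have hfk := (qfact_pos hq0.le hq1 k).ne'
  have hfm := (qfact_pos hq0.le hq1 m).ne'
  have hfν := (qfact_pos hq0.le hq1 (k + 1 + m)).ne'
  have hq' := sub_ne_zero.mpr hq.symm
  simp only [hexp, zpow_neg, zpow_natCast, Nat.add_sub_cancel, Nat.add_sub_cancel_left]
  rw [tsum_congr (g := fun n =>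
      qfact q (k + 1 + m) / (qfact q k * qfact q m) / ((q ^ (k + 1)) ^ m * t)
        * ((q ^ (k + 1)) ^ n * ∏ j ∈ range m, (1 - q ^ n / q ^ j))) fun n => ?_,
    ((hasSum_pow_mul_prod_one_sub_div_pow hq0 hq1 k.succ_ne_zero m).mul_left _).tsum_eq, hnum,
    eq_div_of_mul_eq hfk hden]
  · field_simp
    ring
  · field_simp
    ring
end

section
/- Let 0 < q < 1, let t > 0 be a real number, and let ν ≥ 2 be a natural number. Define F(y, z) = z^ν/t^ν − (z^ν/t^ν) ∏_{i=1}^{ν} (1 − y/(q^{i-1} z)). Then for all real y ≠ 0 and z ≠ 0, applying the q-derivative first in the variable y and then in the variable z to F yields q^{-(ν-1)} [ν]_q [ν−1]_q (z^{ν-2}/t^ν) ∏_{i=1}^{ν-2} (1 − y/(q^{i} z)). That is, with G(y,z) = (F(y,z) − F(qy,z))/((1−q)y), one has (G(y,z) − G(y,qz))/((1−q)z) = q^{-(ν-1)} [ν]_q [ν−1]_q (z^{ν-2}/t^ν) ∏_{i=1}^{ν-2} (1 − y/(q^{i} z)). -/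
noncomputable def qDiff (q : ℝ) (f : ℝ → ℝ) (x : ℝ) : ℝ := (f x - f (q * x)) / ((1 - q) * x)

noncomputable def qSubPow (q : ℝ) (m : ℕ) (y z : ℝ) : ℝ := ∏ i ∈ Finset.range m, (z - y / q ^ i)

section qSubPow

variable {q : ℝ} (m : ℕ) (y z : ℝ)

theorem qSubPow_succ : qSubPow q (m + 1) y z = qSubPow q m y z * (z - y / q ^ m) :=
  Finset.prod_range_succ _ _

theorem qSubPow_succ' : qSubPow q (m + 1) y z = (z - y) * qSubPow q m (y / q) z := by
  unfold qSubPow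
  rw [Finset.prod_range_succ', mul_comm]
  congr 1
  · simp
  · refine Finset.prod_congr rfl fun i _ => ?_
    rw [pow_succ, div_div, mul_comm q]

theorem qSubPow_mul_right (hq : q ≠ 0) :
    qSubPow q m y (q * z) = q ^ m * qSubPow q m (y / q) z := by
  rw [qSubPow, qSubPow, Finset.pow_eq_prod_const, ← Finset.prod_mul_distrib]
  refine Finset.prod_congr rfl fun i _ => ?_
  field_simp

theorem prod_one_sub_div_eq_qSubPow_div (hz : z ≠ 0) :
    ∏ i ∈ Finset.range m, (1 - y / (q ^ i * z)) = qSubPow q m y z / z ^ m := by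
  rw [qSubPow, eq_div_iff (pow_ne_zero m hz), Finset.pow_eq_prod_const, ← Finset.prod_mul_distrib]
  refine Finset.prod_congr rfl fun i _ => ?_
  rw [sub_mul, one_mul, div_mul_eq_mul_div, mul_div_mul_right _ _ hz]

variable {m y z}

theorem qDiff_qSubPow_fst (hq : q ≠ 0) (hq1 : q ≠ 1) (hy : y ≠ 0) :
    qDiff q (fun y => qSubPow q (m + 1) y z) y
      = -((q ^ m)⁻¹ * qnum q (m + 1)) * qSubPow q m y z := by
  have h1q : 1 - q ≠ 0 := sub_ne_zero.mpr hq1.symm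
  rw [qDiff, qSubPow_succ, qSubPow_succ', mul_div_cancel_left₀ y hq, qnum]
  field_simp
  ring

theorem qDiff_qSubPow_snd (hq : q ≠ 0) (hq1 : q ≠ 1) (hz : z ≠ 0) :
    qDiff q (fun z => qSubPow q (m + 1) y z) z = qnum q (m + 1) * qSubPow q m (y / q) z := by
  have h1q : 1 - q ≠ 0 := sub_ne_zero.mpr hq1.symm
  rw [qDiff, qSubPow_mul_right _ _ _ hq, qSubPow_succ', qSubPow_succ, qnum]
  field_simp
  ring

end qSubPow

/-- Applying the `q`-derivative first in `y` and then in `z` to the joint `q`-distribution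
function `F(y,z) = z^ν/t^ν − (z^ν/t^ν) ∏_{i=1}^{ν} (1 − y/(q^{i-1} z))` of the minimum and
maximum yields the joint `q`-density
`q^{-(ν-1)} [ν]_q [ν−1]_q (z^{ν-2}/t^ν) ∏_{i=1}^{ν-2} (1 − y/(q^i z))`. -/
theorem stmt14 (q t : ℝ) (hq0 : 0 < q) (hq1 : q < 1) (ht : 0 < t) (ν : ℕ) (hν : 2 ≤ ν)
    (F : ℝ → ℝ → ℝ)
    (hF : ∀ y z : ℝ, F y z
      = z ^ ν / t ^ ν - z ^ ν / t ^ ν * ∏ i ∈ Finset.range ν, (1 - y / (q ^ i * z)))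
    (G : ℝ → ℝ → ℝ)
    (hG : ∀ y z : ℝ, G y z = (F y z - F (q * y) z) / ((1 - q) * y))
    (y z : ℝ) (hy : y ≠ 0) (hz : z ≠ 0) :
    (G y z - G y (q * z)) / ((1 - q) * z)
      = q ^ (-((ν : ℤ) - 1)) * qnum q ν * qnum q (ν - 1) * (z ^ (ν - 2) / t ^ ν)
          * ∏ i ∈ Finset.range (ν - 2), (1 - y / (q ^ (i + 1) * z)) := by
  obtain ⟨n, rfl⟩ : ∃ n, ν = n + 2 := ⟨ν - 2, by omega⟩
  have hq : q ≠ 0 := hq0.ne'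
  have hq1' : q ≠ 1 := hq1.ne
  have htn : t ^ (n + 2) ≠ 0 := pow_ne_zero _ ht.ne'
  have hF_eq : ∀ y w, w ≠ 0 → F y w = (w ^ (n + 2) - qSubPow q (n + 2) y w) / t ^ (n + 2) := by
    intro y w hw
    rw [hF, prod_one_sub_div_eq_qSubPow_div _ _ _ hw]
    field_simp
  have hG_eq : ∀ w, w ≠ 0 →
      G y w = (q ^ (n + 1))⁻¹ * qnum q (n + 2) / t ^ (n + 2) * qSubPow q (n + 1) y w := by
    intro w hw
    have hdiff_y := qDiff_qSubPow_fst (m := n + 1) (z := w) hq hq1' hy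
    rw [qDiff] at hdiff_y
    rw [hG, hF_eq _ _ hw, hF_eq _ _ hw]
    linear_combination (-1 / t ^ (n + 2)) * hdiff_y
  have hdiff_z := qDiff_qSubPow_snd (m := n) (y := y) hq hq1' hz
  rw [qDiff] at hdiff_z
  have hprod :
      ∏ i ∈ Finset.range n, (1 - y / (q ^ (i + 1) * z)) = qSubPow q n (y / q) z / z ^ n := by
    rw [← prod_one_sub_div_eq_qSubPow_div _ _ _ hz]
    refine Finset.prod_congr rfl fun i _ => ?_
    ring
  have hzpow : q ^ (-(((n + 2 : ℕ) : ℤ) - 1)) = (q ^ (n + 1))⁻¹ := by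
    rw [show -(((n + 2 : ℕ) : ℤ) - 1) = -((n + 1 : ℕ) : ℤ) by push_cast; ring, zpow_neg,
      zpow_natCast]
  rw [hG_eq z hz, hG_eq (q * z) (mul_ne_zero hq hz), ← mul_sub, mul_div_assoc, hdiff_z, hzpow,
    show n + 2 - 1 = n + 1 from rfl, Nat.add_sub_cancel, hprod]
  field_simp
end
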